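/- Let β ⊆ α be compositions with N = |α|−|β| ≥ 1. Then, as formal power series in the variables x_1, x_2, … with rational coefficients, Σ_{T ∈ SIT(α/β)} F_{comp(Des_{Ā*}(T))} = Σ_T x^T, where the right-hand sum runs over all fillings T of the cells of the skew diagram α/β with positive integers such that the entries in the cells of column 1 lying in α/β strictly increase from bottom to top and the entries of every row strictly increase from left to right. -/

import Mathlib

/-!
Standardisation. Number the cells of a filling `T` by increasing entry, numbering cells with
equal entries from the top row down. When the rows and the first column of `T` increase
strictly, this produces a standard immaculate tableau `S`, and `T = f ∘ (S - 1)` for a weakly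
increasing word `f`. The word increases strictly at every `Ā*`-descent `i` of `S`: there `i + 1`
lies weakly above `i`, which the tie-break rules out for equal entries. Conversely every pair
`(S, f)` of this kind arises from exactly one filling, so the monomials `x^T` are counted by
`Σ_S F_{comp(Des_{Ā*}(S))}`.
-/

open scoped Classical

namespace ImmaculateSkew

/-- `part α i` is the `i`-th part (0-indexed) of the composition `α`, or `0` if out of range. -/
def part (α : List ℕ) (i : ℕ) : ℕ := α.getD i 0

/-- a composition: a list of positive integers -/
def IsComposition (α : List ℕ) : Prop := ∀ x ∈ α, 0 < x

/-- `β ⊆ α` for compositions -/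
def SubComp (β α : List ℕ) : Prop :=
  β.length ≤ α.length ∧ ∀ j < β.length, part β j ≤ part α j

/-- cell `(i, j)` (row `i` from the bottom, column `j`, both 0-indexed) lies in the diagram of `α` -/
def InDiagram (α : List ℕ) (c : ℕ × ℕ) : Prop :=
  c.1 < α.length ∧ c.2 < part α c.1

/-- cell lies in the skew diagram `α/β` -/
def InSkew (α β : List ℕ) (c : ℕ × ℕ) : Prop :=
  InDiagram α c ∧ ¬ InDiagram β c

/-- the finite set of cells of the skew diagram `α/β` -/
noncomputable def skewCells (α β : List ℕ) : Finset (ℕ × ℕ) :=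
  (Finset.range α.length ×ˢ Finset.range (α.sum + 1)).filter (InSkew α β)

/-- `N = |α| - |β|` -/
def skewSize (α β : List ℕ) : ℕ := α.sum - β.sum

/-- a filling of the cells of `α/β` using each entry of `E` exactly once, zero off the diagram -/
structure IsStdOn (α β : List ℕ) (E : Finset ℕ) (T : ℕ × ℕ → ℕ) : Prop where
  zero_off : ∀ c, ¬ InSkew α β c → T c = 0
  mem : ∀ c, InSkew α β c → T c ∈ E
  inj : ∀ c c', InSkew α β c → InSkew α β c' → T c = T c' → c = c'
  surj : ∀ v ∈ E, ∃ c, InSkew α β c ∧ T c = v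

/-- row entries strictly increase left to right -/
def RowsStrict (α β : List ℕ) (T : ℕ × ℕ → ℕ) : Prop :=
  ∀ i j j', j < j' → InSkew α β (i, j) → InSkew α β (i, j') → T (i, j) < T (i, j')

/-- row entries weakly increase left to right -/
def RowsWeak (α β : List ℕ) (T : ℕ × ℕ → ℕ) : Prop :=
  ∀ i j j', j < j' → InSkew α β (i, j) → InSkew α β (i, j') → T (i, j) ≤ T (i, j')

/-- all column entries strictly increase bottom to top -/
def ColsStrict (α β : List ℕ) (T : ℕ × ℕ → ℕ) : Prop :=
  ∀ i i' j, i < i' → InSkew α β (i, j) → InSkew α β (i', j) → T (i, j) < T (i', j)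

/-- all column entries weakly increase bottom to top -/
def ColsWeak (α β : List ℕ) (T : ℕ × ℕ → ℕ) : Prop :=
  ∀ i i' j, i < i' → InSkew α β (i, j) → InSkew α β (i', j) → T (i, j) ≤ T (i', j)

/-- the column-1 entries (those in `α/β`) strictly increase bottom to top -/
def FirstColStrict (α β : List ℕ) (T : ℕ × ℕ → ℕ) : Prop :=
  ∀ i i', i < i' → InSkew α β (i, 0) → InSkew α β (i', 0) → T (i, 0) < T (i', 0)

/-- the column-1 entries (those in `α/β`) weakly increase bottom to top -/
def FirstColWeak (α β : List ℕ) (T : ℕ × ℕ → ℕ) : Prop :=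
  ∀ i i', i < i' → InSkew α β (i, 0) → InSkew α β (i', 0) → T (i, 0) ≤ T (i', 0)

/-- standard immaculate tableau of shape `α/β` with entry set `E` -/
def IsSITOn (α β : List ℕ) (E : Finset ℕ) (T : ℕ × ℕ → ℕ) : Prop :=
  IsStdOn α β E T ∧ RowsStrict α β T ∧ FirstColStrict α β T

/-- standard immaculate tableau of shape `α/β` (entries `1, …, N`) -/
def IsSIT (α β : List ℕ) (T : ℕ × ℕ → ℕ) : Prop :=
  IsSITOn α β (Finset.Icc 1 (skewSize α β)) T

/-- standard extended tableau: all columns increase bottom to top -/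
def IsSET (α β : List ℕ) (T : ℕ × ℕ → ℕ) : Prop :=
  IsSIT α β T ∧ ColsStrict α β T

/-- the four descent-set variants -/
inductive Variant | dI | rdI | Astar | Abar

/-- `rowRel a r r'`: the relation required between the row `r` containing `i` and the row `r'`
containing `i+1` for `i` to be an `a`-descent -/
def rowRel : Variant → ℕ → ℕ → Prop
  | .dI    => fun r r' => r < r'
  | .rdI   => fun r r' => r' ≤ r
  | .Astar => fun r r' => r' < r
  | .Abar  => fun r r' => r ≤ r'

/-- the `a`-descent set of a tableau -/
noncomputable def Des (a : Variant) (α β : List ℕ) (T : ℕ × ℕ → ℕ) : Finset ℕ :=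
  (Finset.Icc 1 (skewSize α β - 1)).filter fun k =>
    ∃ c c', InSkew α β c ∧ InSkew α β c' ∧ T c = k ∧ T c' = k + 1 ∧ rowRel a c.1 c'.1

/-- interchange the entries `i` and `i+1` -/
def swapEntries (i : ℕ) (T : ℕ × ℕ → ℕ) : ℕ × ℕ → ℕ :=
  fun c => if T c = i then i + 1 else if T c = i + 1 then i else T c

/-- the 0-Hecke operator `π_i^a` on `SIT(α/β) ∪ {0}` (the zero function plays the role of `0`) -/
noncomputable def piOp (a : Variant) (α β : List ℕ) (i : ℕ) (T : ℕ × ℕ → ℕ) : ℕ × ℕ → ℕ :=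
  if i ∈ Des a α β T then
    (if IsSIT α β (swapEntries i T) then swapEntries i T else fun _ => 0)
  else T

/-- the fundamental quasisymmetric function `F_{comp(D)}` for `D ⊆ {1,…,N-1}`, as a power
series in the variables `x_1, x_2, …` (variable `x_n` is `X n`; `x_0` is unused) -/
noncomputable def Fund (N : ℕ) (D : Finset ℕ) : MvPowerSeries ℕ ℚ :=
  fun d => (Nat.card {f : Fin N → ℕ //
    (∀ j, 1 ≤ f j) ∧
    (∀ j k : Fin N, j ≤ k → f j ≤ f k) ∧
    (∀ (j : ℕ) (_ : 1 ≤ j) (h2 : j < N), j ∈ D → f ⟨j - 1, by omega⟩ < f ⟨j, h2⟩) ∧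
    (∑ j, Finsupp.single (f j) 1) = d} : ℚ)

/-- the generating function `Σ_T x^T` over all fillings of the given cells with positive
integers satisfying the predicate `P` (and equal to `0` off the given cells) -/
noncomputable def genF (cs : Finset (ℕ × ℕ)) (P : (ℕ × ℕ → ℕ) → Prop) :
    MvPowerSeries ℕ ℚ :=
  fun d => (Nat.card {T : ℕ × ℕ → ℕ //
    (∀ c, c ∉ cs → T c = 0) ∧ (∀ c ∈ cs, 1 ≤ T c) ∧ P T ∧
    (∑ c ∈ cs, Finsupp.single (T c) 1) = d} : ℚ)

/-- complete homogeneous symmetric function `h_r` -/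
noncomputable def hFun (r : ℕ) : MvPowerSeries ℕ ℚ :=
  fun d => (Nat.card {f : Fin r → ℕ //
    (∀ j, 1 ≤ f j) ∧ (∀ j k : Fin r, j ≤ k → f j ≤ f k) ∧
    (∑ j, Finsupp.single (f j) 1) = d} : ℚ)

/-- elementary symmetric function `e_r` -/
noncomputable def eFun (r : ℕ) : MvPowerSeries ℕ ℚ :=
  fun d => (Nat.card {f : Fin r → ℕ //
    (∀ j, 1 ≤ f j) ∧ (∀ j k : Fin r, j < k → f j < f k) ∧
    (∑ j, Finsupp.single (f j) 1) = d} : ℚ)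

/-- send a filling to the corresponding basis vector of the free `ℚ`-vector space on
`SIT(α/β)`, or to the zero vector if it is not a standard immaculate tableau -/
noncomputable def toBasis (α β : List ℕ) (U : ℕ × ℕ → ℕ) :
    ({T : ℕ × ℕ → ℕ // IsSIT α β T} →₀ ℚ) :=
  if h : IsSIT α β U then Finsupp.single ⟨U, h⟩ 1 else 0

/-- the linear extension of `π_i^a` to the free `ℚ`-vector space on `SIT(α/β)` -/
noncomputable def piLin (a : Variant) (α β : List ℕ) (i : ℕ) :
    ({T : ℕ × ℕ → ℕ // IsSIT α β T} →₀ ℚ) →ₗ[ℚ]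
      ({T : ℕ × ℕ → ℕ // IsSIT α β T} →₀ ℚ) :=
  Finsupp.lift _ ℚ _ (fun T => toBasis α β (piOp a α β i T.1))

/-- one step: the tableau `T` is obtained from `S` by applying one operator `π_i^a` -/
def stepRel (a : Variant) (α β : List ℕ) (S T : ℕ × ℕ → ℕ) : Prop :=
  IsSIT α β T ∧ ∃ i, 1 ≤ i ∧ i ≤ skewSize α β - 1 ∧ piOp a α β i S = T

/-- `T` is obtained from `S` by applying a (possibly empty) sequence of operators `π_i^a`,
all intermediate results being tableaux -/
def reach (a : Variant) (α β : List ℕ) : (ℕ × ℕ → ℕ) → (ℕ × ℕ → ℕ) → Prop :=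
  Relation.ReflTransGen (stepRel a α β)

/-- the number of skew cells of `α/β` strictly above row `i` other than column-1 cells -/
noncomputable def aboveCount (α β : List ℕ) (i : ℕ) : ℕ :=
  ∑ i' ∈ Finset.Ico (i + 1) α.length,
    (if i' < β.length then part α i' - part β i' else part α i' - 1)

/-- the tableau `S^0_{α/β}`: the column-1 cells of `α/β` are filled with `1, …, ℓ(α)-ℓ(β)`
bottom to top, then the remaining cells are filled row by row, top to bottom, left to right,
with consecutive integers -/
noncomputable def S0 (α β : List ℕ) : ℕ × ℕ → ℕ :=
  fun c =>
    if InSkew α β c then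
      if c.2 = 0 ∧ β.length ≤ c.1 then c.1 - β.length + 1
      else (α.length - β.length) + aboveCount α β c.1 +
        (if c.1 < β.length then c.2 - part β c.1 + 1 else c.2)
    else 0

/-- the row superstandard tableau `S^{row}_{α/β}`: rows filled left to right with `1, 2, …, N`,
bottom row first -/
noncomputable def Srow (α β : List ℕ) : ℕ × ℕ → ℕ :=
  fun c =>
    if InSkew α β c then
      (∑ i' ∈ Finset.range c.1, (part α i' - part β i')) + (c.2 - part β c.1 + 1)
    else 0

/-- `c` is read before `c'` in the reading word (rows top to bottom, right to left in a row) -/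
def readBefore (c c' : ℕ × ℕ) : Prop :=
  c'.1 < c.1 ∨ (c.1 = c'.1 ∧ c'.2 < c.2)

/-- the number of inversions of the reading word of a tableau of shape `α/β` -/
noncomputable def invNum (α β : List ℕ) (T : ℕ × ℕ → ℕ) : ℕ :=
  ((skewCells α β ×ˢ skewCells α β).filter
    (fun p => readBefore p.1 p.2 ∧ T p.2 < T p.1)).card

/-- `φ_U(T)`: fill the cells of `β` by `U` and those of `α/β` by `T` with all entries of `T`
shifted up by `m = |β|` -/
noncomputable def phiU (α β : List ℕ) (U T : ℕ × ℕ → ℕ) : ℕ × ℕ → ℕ :=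
  fun c => if InDiagram β c then U c else if InSkew α β c then T c + β.sum else 0

/-- restriction `T_{≤ m}` of `T` to entries `≤ m` -/
def restrLe (m : ℕ) (T : ℕ × ℕ → ℕ) : ℕ × ℕ → ℕ :=
  fun c => if T c ≤ m then T c else 0

/-- restriction `T_{> m}` of `T` to entries `> m` -/
def restrGt (m : ℕ) (T : ℕ × ℕ → ℕ) : ℕ × ℕ → ℕ :=
  fun c => if m < T c then T c else 0

/-- standardisation `std(T_{>m})`: keep the entries `> m` and subtract `m` from each -/
def stdGt (m : ℕ) (T : ℕ × ℕ → ℕ) : ℕ × ℕ → ℕ :=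
  fun c => if m < T c then T c - m else 0

/-- `T ∈ X_{α,β}`: `T ∈ SIT(α)` and the entries `> |β|` of `T` occupy exactly the cells
of `α/β` -/
def memX (α β : List ℕ) (T : ℕ × ℕ → ℕ) : Prop :=
  IsSIT α [] T ∧ ∀ c, InDiagram α c → (β.sum < T c ↔ ¬ InDiagram β c)

section Cells

variable {α β : List ℕ}

lemma part_eq_zero {l : List ℕ} {i : ℕ} (h : l.length ≤ i) : part l i = 0 := by
  simp [part, List.getD, List.getElem?_eq_none h]

lemma part_le_part (hsub : SubComp β α) (i : ℕ) : part β i ≤ part α i := by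
  by_cases hi : i < β.length
  · exact hsub.2 i hi
  · rw [part_eq_zero (not_lt.1 hi)]
    exact Nat.zero_le _

lemma sum_eq_sum_part (l : List ℕ) : l.sum = ∑ i ∈ Finset.range l.length, part l i := by
  induction l with
  | nil => simp
  | cons a t ih => simp [Finset.sum_range_succ', ih, part, add_comm]

lemma inSkew_iff {c : ℕ × ℕ} :
    InSkew α β c ↔ c.1 < α.length ∧ part β c.1 ≤ c.2 ∧ c.2 < part α c.1 := by
  unfold InSkew InDiagram
  by_cases hb : c.1 < β.length
  · grind
  · simp only [part_eq_zero (not_lt.1 hb)]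
    grind

lemma mem_skewCells {c : ℕ × ℕ} : c ∈ skewCells α β ↔ InSkew α β c := by
  suffices InSkew α β c → c.2 ≤ α.sum by
    simpa [skewCells, Finset.mem_filter, Finset.mem_product] using fun h => ⟨h.1.1, this h⟩
  intro h
  have hpart : part α c.1 ≤ α.sum := by
    rw [part, List.getD_eq_getElem _ _ h.1.1]
    exact List.le_sum_of_mem (List.getElem_mem _)
  have := h.1.2
  omega

lemma skewCells_eq_biUnion :
    skewCells α β = (Finset.range α.length).biUnion
      fun i => (Finset.Ico (part β i) (part α i)).map ⟨Prod.mk i, Prod.mk_right_injective i⟩ := by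
  ext ⟨i, j⟩
  simp [mem_skewCells, inSkew_iff, and_assoc]

lemma card_skewCells (hsub : SubComp β α) : (skewCells α β).card = skewSize α β := by
  rw [skewCells_eq_biUnion, Finset.card_biUnion fun i _ i' _ hii' => by
    simp only [Finset.disjoint_left, Finset.mem_map, Function.Embedding.coeFn_mk]
    rintro _ ⟨j, -, rfl⟩ ⟨j', -, h⟩
    exact hii' (congrArg Prod.fst h).symm]
  have hβ : ∑ i ∈ Finset.range β.length, part β i = ∑ i ∈ Finset.range α.length, part β i :=
    Finset.sum_subset (Finset.range_subset_range.2 hsub.1)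
      fun i _ hi => part_eq_zero (by simpa using hi)
  simp only [Finset.card_map, Nat.card_Ico, skewSize, sum_eq_sum_part α, sum_eq_sum_part β, hβ]
  rw [eq_tsub_iff_add_eq_of_le (Finset.sum_le_sum fun i _ => part_le_part hsub i),
    ← Finset.sum_add_distrib]
  exact Finset.sum_congr rfl fun i _ => Nat.sub_add_cancel (part_le_part hsub i)

end Cells

section Rank

variable {ι κ κ' : Type*} [LinearOrder κ] [LinearOrder κ'] {s : Finset ι} {g : ι → κ} {g' : ι → κ'}
  {c c' : ι}

def rank (s : Finset ι) (g : ι → κ) (c : ι) : ℕ := (s.filter fun c' => g c' < g c).card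

lemma rank_lt_card (hc : c ∈ s) : rank s g c < s.card :=
  Finset.card_lt_card <| Finset.filter_ssubset.2 ⟨c, hc, lt_irrefl _⟩

lemma rank_lt_rank (hc : c ∈ s) (h : g c < g c') : rank s g c < rank s g c' := by
  refine Finset.card_lt_card (Finset.ssubset_iff_of_subset ?_ |>.2 ⟨c, ?_, ?_⟩)
  · exact Finset.monotone_filter_right s fun _ _ hx => hx.trans h
  · exact Finset.mem_filter.2 ⟨hc, h⟩
  · simp

lemma rank_lt_rank_iff (hinj : Set.InjOn g s) (hc : c ∈ s) (hc' : c' ∈ s) :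
    rank s g c < rank s g c' ↔ g c < g c' := by
  refine ⟨fun h => lt_of_not_ge fun hle => ?_, rank_lt_rank hc⟩
  rcases hle.lt_or_eq with hlt | heq
  · exact (rank_lt_rank hc' hlt).not_gt h
  · exact h.ne (congrArg _ (hinj hc hc' heq.symm))

lemma rank_injOn (hinj : Set.InjOn g s) : Set.InjOn (rank s g) s := by
  intro c hc c' hc' h
  by_contra hne
  rcases lt_or_gt_of_ne (mt (@hinj c hc c' hc') hne) with hlt | hlt
  · exact (rank_lt_rank hc hlt).ne h
  · exact (rank_lt_rank hc' hlt).ne h.symm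

lemma exists_rank_eq (hinj : Set.InjOn g s) {k : ℕ} (hk : k < s.card) :
    ∃ c ∈ s, rank s g c = k := by
  obtain ⟨c, hc, hck⟩ := Finset.surj_on_of_inj_on_of_card_le (fun c _ => rank s g c)
    (fun c hc => Finset.mem_range.2 (rank_lt_card hc))
    (fun c c' hc hc' h => rank_injOn hinj hc hc' h) (by simp) k (Finset.mem_range.2 hk)
  exact ⟨c, hc, hck.symm⟩

lemma rank_congr (h : ∀ c ∈ s, g c < g c' ↔ g' c < g' c') : rank s g c' = rank s g' c' :=
  congrArg Finset.card (Finset.filter_congr h)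

end Rank

section Standardisation

variable {α β : List ℕ} {T : ℕ × ℕ → ℕ} {c c' : ℕ × ℕ}

def stdKey (T : ℕ × ℕ → ℕ) (c : ℕ × ℕ) : ℕ ×ₗ ℕᵒᵈ := toLex (T c, OrderDual.toDual c.1)

lemma stdKey_lt_stdKey : stdKey T c < stdKey T c' ↔ T c < T c' ∨ T c = T c' ∧ c'.1 < c.1 :=
  Prod.Lex.toLex_lt_toLex

noncomputable def stdOf (α β : List ℕ) (T : ℕ × ℕ → ℕ) : ℕ × ℕ → ℕ :=
  fun c => if InSkew α β c then rank (skewCells α β) (stdKey T) c + 1 else 0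

lemma stdKey_injOn (hrow : RowsStrict α β T) : Set.InjOn (stdKey T) (skewCells α β) := by
  rintro ⟨i, j⟩ hc ⟨i', j'⟩ hc' h
  simp only [stdKey, EmbeddingLike.apply_eq_iff_eq, Prod.mk.injEq] at h
  obtain ⟨hT, rfl⟩ := h
  rw [Finset.mem_coe, mem_skewCells] at hc hc'
  rcases lt_trichotomy j j' with hj | rfl | hj
  · exact absurd hT (hrow i j j' hj hc hc').ne
  · rfl
  · exact absurd hT (hrow i j' j hj hc' hc).ne'

lemma stdOf_lt_stdOf_iff (hrow : RowsStrict α β T) (hc : InSkew α β c) (hc' : InSkew α β c') :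
    stdOf α β T c < stdOf α β T c' ↔ stdKey T c < stdKey T c' := by
  simp only [stdOf, if_pos hc, if_pos hc', Nat.add_lt_add_iff_right]
  exact rank_lt_rank_iff (stdKey_injOn hrow) (mem_skewCells.2 hc) (mem_skewCells.2 hc')

lemma isSIT_stdOf (hsub : SubComp β α) (hfc : FirstColStrict α β T) (hrow : RowsStrict α β T) :
    IsSIT α β (stdOf α β T) := by
  have hinj := stdKey_injOn hrow
  refine ⟨⟨fun c hc => if_neg hc, fun c hc => ?_, fun c c' hc hc' h => ?_, fun v hv => ?_⟩,
    fun i j j' hj hc hc' => ?_, fun i i' hi hc hc' => ?_⟩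
  · have := rank_lt_card (g := stdKey T) (mem_skewCells.2 hc)
    rw [card_skewCells hsub] at this
    simp only [stdOf, if_pos hc, Finset.mem_Icc]
    omega
  · simp only [stdOf, if_pos hc, if_pos hc', Nat.add_right_cancel_iff] at h
    exact rank_injOn hinj (mem_skewCells.2 hc) (mem_skewCells.2 hc') h
  · rw [Finset.mem_Icc] at hv
    obtain ⟨c, hc, hrk⟩ := exists_rank_eq hinj (k := v - 1) (by rw [card_skewCells hsub]; omega)
    rw [mem_skewCells] at hc
    exact ⟨c, hc, by simp only [stdOf, if_pos hc, hrk]; omega⟩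
  · rw [stdOf_lt_stdOf_iff hrow hc hc', stdKey_lt_stdKey]
    exact Or.inl (hrow i j j' hj hc hc')
  · rw [stdOf_lt_stdOf_iff hrow hc hc', stdKey_lt_stdKey]
    exact Or.inl (hfc i i' hi hc hc')

end Standardisation

section StandardFillings

variable {α β : List ℕ} {E : Finset ℕ} {S : ℕ × ℕ → ℕ} {c : ℕ × ℕ} {k n : ℕ}

noncomputable def cellAt (α β : List ℕ) (S : ℕ × ℕ → ℕ) (k : ℕ) : ℕ × ℕ :=
  Function.invFunOn S {c | InSkew α β c} k

lemma IsStdOn.cellAt_spec (hS : IsStdOn α β E S) (hk : k ∈ E) :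
    InSkew α β (cellAt α β S k) ∧ S (cellAt α β S k) = k :=
  Function.invFunOn_pos (hS.surj k hk)

lemma IsStdOn.cellAt_apply (hS : IsStdOn α β E S) (hc : InSkew α β c) : cellAt α β S (S c) = c :=
  have h := hS.cellAt_spec (hS.mem c hc)
  hS.inj _ _ h.1 hc h.2

lemma IsStdOn.sum_comp_sub_one {M : Type*} [AddCommMonoid M] (hS : IsStdOn α β (Finset.Icc 1 n) S)
    (φ : ℕ → M) : ∑ c ∈ skewCells α β, φ (S c - 1) = ∑ j ∈ Finset.range n, φ j := by
  have hmem : ∀ c ∈ skewCells α β, S c ∈ Finset.Icc 1 n := fun c hc => hS.mem c (mem_skewCells.1 hc)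
  refine Finset.sum_nbij' (fun c => S c - 1) (fun j => cellAt α β S (j + 1))
    (fun c hc => ?_) (fun j hj => ?_) (fun c hc => ?_) (fun j hj => ?_) fun _ _ => rfl
  · have := Finset.mem_Icc.1 (hmem c hc)
    simp only [Finset.mem_range]
    omega
  · rw [Finset.mem_range] at hj
    exact mem_skewCells.2 (hS.cellAt_spec (Finset.mem_Icc.2 ⟨by omega, by omega⟩)).1
  · have := Finset.mem_Icc.1 (hmem c hc)
    rw [Nat.sub_add_cancel this.1, hS.cellAt_apply (mem_skewCells.1 hc)]
  · rw [Finset.mem_range] at hj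
    simp [(hS.cellAt_spec (k := j + 1) (Finset.mem_Icc.2 ⟨by omega, by omega⟩)).2]

lemma IsStdOn.eq_rank_add_one (hS : IsStdOn α β (Finset.Icc 1 n) S) (hc : InSkew α β c) :
    S c = rank (skewCells α β) S c + 1 := by
  have hmem := Finset.mem_Icc.1 (hS.mem c hc)
  suffices rank (skewCells α β) S c = (Finset.Ico 1 (S c)).card by
    rw [this, Nat.card_Ico]
    omega
  refine Finset.card_nbij S (fun c' hc' => ?_) (fun c₁ h₁ c₂ h₂ h => ?_) fun v hv => ?_
  · rw [Finset.coe_filter, Set.mem_ofPred_eq, mem_skewCells] at hc'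
    have := Finset.mem_Icc.1 (hS.mem c' hc'.1)
    exact Finset.mem_Ico.2 ⟨this.1, hc'.2⟩
  · simp only [Finset.coe_filter, Set.mem_ofPred_eq, mem_skewCells] at h₁ h₂
    exact hS.inj _ _ h₁.1 h₂.1 h
  · rw [Finset.coe_Ico, Set.mem_Ico] at hv
    obtain ⟨c', hc', rfl⟩ := hS.surj v (Finset.mem_Icc.2 ⟨hv.1, by omega⟩)
    exact ⟨c', by simpa [mem_skewCells] using ⟨hc', hv.2⟩, rfl⟩

lemma IsSIT.mem_des_iff (hS : IsSIT α β S) (hk : 1 ≤ k) (hkN : k < skewSize α β) :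
    k ∈ Des .Abar α β S ↔ (cellAt α β S k).1 ≤ (cellAt α β S (k + 1)).1 := by
  have h₁ := hS.1.cellAt_spec (Finset.mem_Icc.2 ⟨hk, hkN.le⟩)
  have h₂ := hS.1.cellAt_spec (Finset.mem_Icc.2 ⟨by omega, hkN⟩)
  simp only [Des, Finset.mem_filter, Finset.mem_Icc]
  constructor
  · rintro ⟨-, d, d', hd, hd', rfl, hd'k, hrel⟩
    rwa [hS.1.cellAt_apply hd, ← hd'k, hS.1.cellAt_apply hd']
  · exact fun h => ⟨⟨hk, by omega⟩, _, _, h₁.1, h₂.1, h₁.2, h₂.2, h⟩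

end StandardFillings

section Compatible

variable {α β : List ℕ} {S T : ℕ × ℕ → ℕ} {g : ℕ → ℕ} {c c' : ℕ × ℕ}

/-- The words summed over in `F_{comp(Des_{Ā*}(S))}`, indexed from `0`. -/
structure Compatible (α β : List ℕ) (S : ℕ × ℕ → ℕ) (g : ℕ → ℕ) : Prop where
  monotoneOn : MonotoneOn g (Set.Iio (skewSize α β))
  lt_of_mem_des : ∀ j, 1 ≤ j → j < skewSize α β → j ∈ Des .Abar α β S → g (j - 1) < g j

/-- Equal letters of a compatible word sit in a run of non-descents, along which the rows of
`S` strictly decrease. -/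
lemma Compatible.fst_lt_of_eq (hS : IsSIT α β S) (hg : Compatible α β S g)
    (hc : InSkew α β c) (hc' : InSkew α β c') (hlt : S c < S c')
    (heq : g (S c - 1) = g (S c' - 1)) : c'.1 < c.1 := by
  have hmem := Finset.mem_Icc.1 (hS.1.mem c hc)
  have hmem' := Finset.mem_Icc.1 (hS.1.mem c' hc')
  have hanti : StrictAntiOn (fun k => (cellAt α β S k).1) (Set.Icc (S c) (S c')) := by
    refine strictAntiOn_of_add_one_lt Set.ordConnected_Icc ?_
    rintro k - ⟨hck, -⟩ ⟨-, hkc'⟩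
    have hkN : k < skewSize α β := by omega
    refine lt_of_not_ge fun hle => ?_
    have hdes := hg.lt_of_mem_des k (by omega) hkN ((hS.mem_des_iff (by omega) hkN).2 hle)
    have h₁ : g (S c - 1) ≤ g (k - 1) :=
      hg.monotoneOn (Set.mem_Iio.2 (by omega)) (Set.mem_Iio.2 (by omega)) (by omega)
    have h₂ : g k ≤ g (S c' - 1) :=
      hg.monotoneOn (Set.mem_Iio.2 (by omega)) (Set.mem_Iio.2 (by omega)) (by omega)
    omega
  have : (cellAt α β S (S c')).1 < (cellAt α β S (S c)).1 :=
    hanti ⟨le_rfl, hlt.le⟩ ⟨hlt.le, le_rfl⟩ hlt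
  rwa [hS.1.cellAt_apply hc, hS.1.cellAt_apply hc'] at this

lemma Compatible.lt_iff_stdKey_lt (hS : IsSIT α β S) (hg : Compatible α β S g)
    (hT : ∀ c, InSkew α β c → T c = g (S c - 1)) (hc : InSkew α β c) (hc' : InSkew α β c') :
    S c < S c' ↔ stdKey T c < stdKey T c' := by
  have forward : ∀ {c c'}, InSkew α β c → InSkew α β c' → S c < S c' →
      stdKey T c < stdKey T c' := by
    intro c c' hc hc' hlt
    have hmem := Finset.mem_Icc.1 (hS.1.mem c hc)
    have hmem' := Finset.mem_Icc.1 (hS.1.mem c' hc')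
    rw [stdKey_lt_stdKey, hT c hc, hT c' hc']
    rcases (hg.monotoneOn (Set.mem_Iio.2 (by omega)) (Set.mem_Iio.2 (by omega)) (by omega :
      S c - 1 ≤ S c' - 1)).lt_or_eq with h | h
    · exact Or.inl h
    · exact Or.inr ⟨h, hg.fst_lt_of_eq hS hc hc' hlt h⟩
  refine ⟨forward hc hc', fun h => lt_of_not_ge fun hle => ?_⟩
  rcases hle.lt_or_eq with hlt | heq
  · exact (forward hc' hc hlt).not_gt h
  · exact h.ne (by rw [hS.1.inj _ _ hc hc' heq.symm])

lemma Compatible.stdOf_eq (hS : IsSIT α β S) (hg : Compatible α β S g)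
    (hT : ∀ c, InSkew α β c → T c = g (S c - 1)) : stdOf α β T = S := by
  funext c
  by_cases hc : InSkew α β c
  · rw [stdOf, if_pos hc, hS.1.eq_rank_add_one hc]
    refine congrArg (· + 1) (rank_congr fun c' hc' => ?_).symm
    exact hg.lt_iff_stdKey_lt hS hT (mem_skewCells.1 hc') hc
  · rw [stdOf, if_neg hc, hS.1.zero_off c hc]

lemma Compatible.rowsStrict (hS : IsSIT α β S) (hg : Compatible α β S g)
    (hT : ∀ c, InSkew α β c → T c = g (S c - 1)) : RowsStrict α β T := by
  intro i j j' hj hc hc'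
  have := (hg.lt_iff_stdKey_lt hS hT hc hc').1 (hS.2.1 i j j' hj hc hc')
  rw [stdKey_lt_stdKey] at this
  exact this.resolve_right fun h => lt_irrefl i h.2

lemma Compatible.firstColStrict (hS : IsSIT α β S) (hg : Compatible α β S g)
    (hT : ∀ c, InSkew α β c → T c = g (S c - 1)) : FirstColStrict α β T := by
  intro i i' hi hc hc'
  have := (hg.lt_iff_stdKey_lt hS hT hc hc').1 (hS.2.2 i i' hi hc hc')
  rw [stdKey_lt_stdKey] at this
  exact this.resolve_right fun h => lt_asymm hi h.2

end Compatible

section Word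

variable {α β : List ℕ} {T : ℕ × ℕ → ℕ} {c : ℕ × ℕ}

noncomputable def word (α β : List ℕ) (T : ℕ × ℕ → ℕ) (j : ℕ) : ℕ :=
  T (cellAt α β (stdOf α β T) (j + 1))

lemma apply_eq_word (hsub : SubComp β α) (hfc : FirstColStrict α β T) (hrow : RowsStrict α β T)
    (hc : InSkew α β c) : T c = word α β T (stdOf α β T c - 1) := by
  have hS := isSIT_stdOf hsub hfc hrow
  have := Finset.mem_Icc.1 (hS.1.mem c hc)
  rw [word, Nat.sub_add_cancel this.1, hS.1.cellAt_apply hc]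

lemma stdKey_cellAt_lt_stdKey_cellAt (hsub : SubComp β α) (hfc : FirstColStrict α β T)
    (hrow : RowsStrict α β T) {j k : ℕ} (hjk : j < k) (hk : k < skewSize α β) :
    stdKey T (cellAt α β (stdOf α β T) (j + 1)) < stdKey T (cellAt α β (stdOf α β T) (k + 1)) := by
  have hS := isSIT_stdOf hsub hfc hrow
  have hj := hS.1.cellAt_spec (k := j + 1) (Finset.mem_Icc.2 ⟨by omega, by omega⟩)
  have hk := hS.1.cellAt_spec (k := k + 1) (Finset.mem_Icc.2 ⟨by omega, by omega⟩)
  rw [← stdOf_lt_stdOf_iff hrow hj.1 hk.1, hj.2, hk.2]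
  omega

lemma compatible_word (hsub : SubComp β α) (hfc : FirstColStrict α β T) (hrow : RowsStrict α β T) :
    Compatible α β (stdOf α β T) (word α β T) := by
  have hS := isSIT_stdOf hsub hfc hrow
  refine ⟨fun j _ k hk hjk => ?_, fun j hj hjN hdes => ?_⟩
  · rcases hjk.lt_or_eq with hjk | rfl
    · have := stdKey_cellAt_lt_stdKey_cellAt hsub hfc hrow hjk hk
      rw [stdKey_lt_stdKey] at this
      exact this.elim le_of_lt fun h => h.1.le
    · exact le_rfl
  · have := stdKey_cellAt_lt_stdKey_cellAt hsub hfc hrow (Nat.sub_one_lt_of_lt hj) hjN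
    rw [Nat.sub_add_cancel hj, stdKey_lt_stdKey] at this
    rw [hS.mem_des_iff hj hjN] at hdes
    unfold word
    rw [Nat.sub_add_cancel hj]
    exact this.resolve_right fun h => hdes.not_gt h.2

end Word

section Counting

variable {α β : List ℕ} {S T : ℕ × ℕ → ℕ} {c : ℕ × ℕ} {d : ℕ →₀ ℕ}

def fundWords (N : ℕ) (D : Finset ℕ) (d : ℕ →₀ ℕ) : Set (Fin N → ℕ) :=
  {f | (∀ j, 1 ≤ f j) ∧ (∀ j k : Fin N, j ≤ k → f j ≤ f k) ∧
    (∀ (j : ℕ) (_ : 1 ≤ j) (h2 : j < N), j ∈ D → f ⟨j - 1, by omega⟩ < f ⟨j, h2⟩) ∧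
    (∑ j, Finsupp.single (f j) 1) = d}

lemma coeff_Fund (N : ℕ) (D : Finset ℕ) (d : ℕ →₀ ℕ) :
    MvPowerSeries.coeff d (Fund N D) = Nat.card (fundWords N D d) := rfl

def immaculateTableaux (α β : List ℕ) (d : ℕ →₀ ℕ) : Set (ℕ × ℕ → ℕ) :=
  {T | (∀ c, c ∉ skewCells α β → T c = 0) ∧ (∀ c ∈ skewCells α β, 1 ≤ T c) ∧
    (FirstColStrict α β T ∧ RowsStrict α β T) ∧
    (∑ c ∈ skewCells α β, Finsupp.single (T c) 1) = d}

lemma coeff_genF (α β : List ℕ) (d : ℕ →₀ ℕ) :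
    MvPowerSeries.coeff d (genF (skewCells α β) fun T => FirstColStrict α β T ∧ RowsStrict α β T) =
      Nat.card (immaculateTableaux α β d) := rfl

lemma mem_support_of_sum_single_eq {ι : Type*} {s : Finset ι} {g : ι → ℕ}
    (h : ∑ i ∈ s, Finsupp.single (g i) 1 = d) {i : ι} (hi : i ∈ s) : g i ∈ d.support := by
  rw [Finsupp.mem_support_iff, ← h, Finsupp.finsetSum_apply]
  exact (Finset.sum_pos' (fun _ _ => Nat.zero_le _) ⟨i, hi, by simp⟩).ne'

lemma finite_fundWords (N : ℕ) (D : Finset ℕ) (d : ℕ →₀ ℕ) : (fundWords N D d).Finite :=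
  (Set.Finite.pi (t := fun _ => (d.support : Set ℕ)) fun _ => d.support.finite_toSet).subset
    fun _ hf => Set.mem_univ_pi.2 fun j => mem_support_of_sum_single_eq hf.2.2.2 (Finset.mem_univ j)

instance finite_isSIT (α β : List ℕ) : Finite {S // IsSIT α β S} := by
  refine Finite.of_injective
    (fun S (c : skewCells α β) => (⟨S.1 c, S.2.1.mem c (mem_skewCells.1 c.2)⟩ :
      Finset.Icc 1 (skewSize α β))) fun S S' h => Subtype.ext (funext fun c => ?_)
  by_cases hc : InSkew α β c
  · exact congrArg Subtype.val (congrFun h ⟨c, mem_skewCells.2 hc⟩)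
  · rw [S.2.1.zero_off c hc, S'.2.1.zero_off c hc]

lemma extend_val_apply {γ : Type*} {n : ℕ} (f : Fin n → γ) (e : ℕ → γ) {k : ℕ} (hk : k < n) :
    Function.extend Fin.val f e k = f ⟨k, hk⟩ :=
  Fin.val_injective.extend_apply f e ⟨k, hk⟩

noncomputable def fill (α β : List ℕ) (S : ℕ × ℕ → ℕ) (f : Fin (skewSize α β) → ℕ) :
    ℕ × ℕ → ℕ :=
  fun c => if InSkew α β c then Function.extend Fin.val f 0 (S c - 1) else 0

lemma compatible_extend {f : Fin (skewSize α β) → ℕ}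
    (hf : f ∈ fundWords (skewSize α β) (Des .Abar α β S) d) :
    Compatible α β S (Function.extend Fin.val f 0) := by
  refine ⟨fun j hj k hk hjk => ?_, fun j hj hjN hdes => ?_⟩
  · rw [extend_val_apply f 0 hj, extend_val_apply f 0 hk]
    exact hf.2.1 _ _ hjk
  · rw [extend_val_apply f 0 (by omega), extend_val_apply f 0 hjN]
    exact hf.2.2.1 j hj hjN hdes

lemma stdOf_fill (hS : IsSIT α β S) {f : Fin (skewSize α β) → ℕ}
    (hf : f ∈ fundWords (skewSize α β) (Des .Abar α β S) d) : stdOf α β (fill α β S f) = S :=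
  (compatible_extend hf).stdOf_eq hS fun _ hc => if_pos hc

lemma fill_cellAt (hS : IsSIT α β S) (f : Fin (skewSize α β) → ℕ) (j : Fin (skewSize α β)) :
    fill α β S f (cellAt α β S (j + 1)) = f j := by
  have h := hS.1.cellAt_spec (k := j + 1) (Finset.mem_Icc.2 ⟨by omega, j.isLt⟩)
  rw [fill, if_pos h.1, h.2, Nat.add_sub_cancel, extend_val_apply f 0 j.isLt]

lemma sum_single_fill (hS : IsSIT α β S) (f : Fin (skewSize α β) → ℕ) :
    ∑ c ∈ skewCells α β, Finsupp.single (fill α β S f c) 1 = ∑ j, Finsupp.single (f j) 1 := by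
  rw [Finset.sum_congr rfl fun c hc => by rw [fill, if_pos (mem_skewCells.1 hc)],
    hS.1.sum_comp_sub_one (fun k => Finsupp.single (Function.extend Fin.val f 0 k) 1),
    ← Fin.sum_univ_eq_sum_range]
  simp only [Fin.val_injective.extend_apply]

lemma fill_mem_immaculateTableaux (hS : IsSIT α β S) {f : Fin (skewSize α β) → ℕ}
    (hf : f ∈ fundWords (skewSize α β) (Des .Abar α β S) d) :
    fill α β S f ∈ immaculateTableaux α β d := by
  have hT : ∀ c, InSkew α β c → fill α β S f c = Function.extend Fin.val f 0 (S c - 1) :=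
    fun c hc => if_pos hc
  refine ⟨fun c hc => if_neg (mt mem_skewCells.2 hc), fun c hc => ?_,
    ⟨(compatible_extend hf).firstColStrict hS hT, (compatible_extend hf).rowsStrict hS hT⟩,
    (sum_single_fill hS f).trans hf.2.2.2⟩
  have := Finset.mem_Icc.1 (hS.1.mem c (mem_skewCells.1 hc))
  rw [hT c (mem_skewCells.1 hc), extend_val_apply f 0 (by omega)]
  exact hf.1 _

lemma word_mem_fundWords (hsub : SubComp β α) (hT : T ∈ immaculateTableaux α β d) :
    (fun j : Fin (skewSize α β) => word α β T j) ∈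
      fundWords (skewSize α β) (Des .Abar α β (stdOf α β T)) d := by
  obtain ⟨-, hpos, ⟨hfc, hrow⟩, hsum⟩ := hT
  have hS := isSIT_stdOf hsub hfc hrow
  have hg := compatible_word hsub hfc hrow
  refine ⟨fun j => hpos _ (mem_skewCells.2 (hS.1.cellAt_spec (k := j + 1)
      (Finset.mem_Icc.2 ⟨by omega, j.isLt⟩)).1),
    fun j k hjk => hg.monotoneOn j.isLt k.isLt hjk,
    fun j hj hjN hdes => hg.lt_of_mem_des j hj hjN hdes, ?_⟩
  rw [← hsum, Fin.sum_univ_eq_sum_range (fun j => Finsupp.single (word α β T j) 1),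
    ← hS.1.sum_comp_sub_one]
  exact Finset.sum_congr rfl fun c hc => by
    rw [← apply_eq_word hsub hfc hrow (mem_skewCells.1 hc)]

lemma fill_word (hsub : SubComp β α) (hT : T ∈ immaculateTableaux α β d) :
    fill α β (stdOf α β T) (fun j => word α β T j) = T := by
  obtain ⟨hzero, -, ⟨hfc, hrow⟩, -⟩ := hT
  funext c
  by_cases hc : InSkew α β c
  · have := Finset.mem_Icc.1 ((isSIT_stdOf hsub hfc hrow).1.mem c hc)
    rw [fill, if_pos hc, extend_val_apply _ 0 (by omega), apply_eq_word hsub hfc hrow hc]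
  · rw [fill, if_neg hc, hzero c (mt mem_skewCells.1 hc)]

theorem bijective_fill (hsub : SubComp β α) (d : ℕ →₀ ℕ) :
    Function.Bijective fun p : (Σ S : {S // IsSIT α β S},
        fundWords (skewSize α β) (Des .Abar α β S.1) d) =>
      (⟨fill α β p.1.1 p.2.1, fill_mem_immaculateTableaux p.1.2 p.2.2⟩ :
        immaculateTableaux α β d) := by
  refine ⟨?_, fun T => ⟨⟨⟨stdOf α β T, isSIT_stdOf hsub T.2.2.2.1.1 T.2.2.2.1.2⟩,
    ⟨_, word_mem_fundWords hsub T.2⟩⟩, Subtype.ext (fill_word hsub T.2)⟩⟩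
  rintro ⟨⟨S, hS⟩, ⟨f, hf⟩⟩ ⟨⟨S', hS'⟩, ⟨f', hf'⟩⟩ h
  replace h : fill α β S f = fill α β S' f' := congrArg Subtype.val h
  obtain rfl : S = S' := by rw [← stdOf_fill hS hf, h, stdOf_fill hS' hf']
  obtain rfl : f = f' := funext fun j => by rw [← fill_cellAt hS f j, h, fill_cellAt hS f' j]
  rfl

theorem card_immaculateTableaux (hsub : SubComp β α) (d : ℕ →₀ ℕ) [Fintype {S // IsSIT α β S}] :
    Nat.card (immaculateTableaux α β d) =
      ∑ S : {S // IsSIT α β S}, Nat.card (fundWords (skewSize α β) (Des .Abar α β S.1) d) := by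
  have (S : {S // IsSIT α β S}) :=
    (finite_fundWords (skewSize α β) (Des .Abar α β S.1) d).to_subtype
  rw [← Nat.card_sigma, Nat.card_eq_of_bijective _ (bijective_fill hsub d)]

end Counting

theorem skew_Abar_generating_function_general (α β : List ℕ) (hsub : SubComp β α) :
    (∑ᶠ (T : ℕ × ℕ → ℕ) (_ : IsSIT α β T), Fund (skewSize α β) (Des .Abar α β T)) =
      genF (skewCells α β) (fun T => FirstColStrict α β T ∧ RowsStrict α β T) := by
  let := Fintype.ofFinite {S // IsSIT α β S}
  rw [← finsum_subtype_eq_finsum_cond, finsum_eq_sum_of_fintype]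
  ext d
  simp only [map_sum, coeff_Fund, coeff_genF, card_immaculateTableaux hsub d, Nat.cast_sum]

/-- `Σ_{T ∈ SIT(α/β)} F_{comp(Des_{Ā*}(T))}` equals the generating function of
all fillings of `α/β` with column-1 entries strictly increasing bottom to top and all rows
strictly increasing left to right. -/
theorem skew_Abar_generating_function (α β : List ℕ)
    (hα : IsComposition α) (hβ : IsComposition β) (hsub : SubComp β α)
    (hN : 1 ≤ skewSize α β) :
    (∑ᶠ (T : ℕ × ℕ → ℕ) (_ : IsSIT α β T), Fund (skewSize α β) (Des .Abar α β T)) =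
      genF (skewCells α β) (fun T => FirstColStrict α β T ∧ RowsStrict α β T) :=
  skew_Abar_generating_function_general α β hsub

end ImmaculateSkew
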